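/- In the conformal geometric algebra Cl(3,1) of the plane, the elements S = e₁e and T = 1 + n e₁/2 (where n = e + ē) satisfy S² = -1 and (ST)³ = -1; hence their images in the conformal group (where ±X act identically) satisfy the modular group relations S² = I and (ST)³ = I. -/

import Mathlib

noncomputable section
open CliffordAlgebra

/-- The quadratic form of signature (+,+,+,-) for the conformal geometric algebra of the
plane: generators e₁, e₂, e, ē with e₁² = e₂² = e² = 1 and ē² = -1. -/
def Q31 : QuadraticForm ℝ (Fin 4 → ℝ) :=
  QuadraticMap.weightedSumSquares ℝ ![(1 : ℝ), 1, 1, -1]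

/-- The conformal geometric algebra Cl(3,1) of the plane. -/
abbrev CGA := CliffordAlgebra Q31

/-- The generators: `g 0 = e₁`, `g 1 = e₂`, `g 2 = e`, `g 3 = ē`. -/
def g (i : Fin 4) : CGA := ι Q31 (Pi.single i 1)

/-- The null vector `n = e + ē`. -/
def nv : CGA := g 2 + g 3

/-- The null vector `n̄ = e - ē`. -/
def nbv : CGA := g 2 - g 3

/-!
With `B = e₁e` and `C = eē` one finds `ST = B + (1 + C)/2`, using `e n = 1 + C` and that `e₁`
commutes with `C`. Since `B² = -1`, `C² = 1` and `B` anticommutes with `C`, this element satisfies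
`x² = x - 1`, so `x³ = x² - x = -1`. Both `S²` and `(ST)³` are then `-1`, and sandwiching by `-1`
is the identity because `reverse (-1) = -1`.
-/

namespace QuadraticMap

variable {ι R : Type*} [Fintype ι] [DecidableEq ι] [CommSemiring R]

theorem weightedSumSquares_single (w : ι → R) (i : ι) :
    weightedSumSquares R w (Pi.single i 1) = w i := by
  simp [weightedSumSquares_apply, Pi.single_apply]

theorem isOrtho_weightedSumSquares_single (w : ι → R) {i j : ι} (hij : i ≠ j) :
    (weightedSumSquares R w).IsOrtho (Pi.single i 1) (Pi.single j 1) := by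
  rw [isOrtho_def]
  simp only [weightedSumSquares_apply, ← Finset.sum_add_distrib]
  refine Finset.sum_congr rfl fun k _ => ?_
  have hcross : (Pi.single i 1 : ι → R) k * (Pi.single j 1 : ι → R) k = 0 := by
    rcases eq_or_ne k i with rfl | hki
    · simp [hij.symm]
    · simp [Pi.single_apply, hki]
  simp only [Pi.add_apply, add_mul, mul_add, hcross, mul_comm ((Pi.single j 1 : ι → R) k),
    add_zero, zero_add, smul_add]

end QuadraticMap

section RingIdentities

variable {A : Type*} [Ring A]

theorem mul_mul_self_of_anticomm {a b : A} (hab : a * b = -(b * a)) :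
    a * b * (a * b) = -(a * a * (b * b)) := by
  have hba : b * a = -(a * b) := by rw [hab, neg_neg]
  calc a * b * (a * b) = a * (b * a) * b := by simp only [mul_assoc]
    _ = -(a * a * (b * b)) := by rw [hba]; noncomm_ring

theorem pow_three_eq_neg_one_of_mul_self_eq_sub_one {x : A} (h : x * x = x - 1) : x ^ 3 = -1 := by
  rw [pow_succ, sq, h, sub_mul, h, one_mul]
  abel

variable {K : Type*} [Field K] [NeZero (2 : K)] [Algebra K A]

theorem mul_self_eq_sub_one_of_anticomm {b c : A} (hb : b * b = -1) (hc : c * c = 1)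
    (hbc : b * c = -(c * b)) :
    (b + (1 / 2 : K) • (1 + c)) * (b + (1 / 2 : K) • (1 + c)) =
      b + (1 / 2 : K) • (1 + c) - 1 := by
  simp only [mul_add, add_mul, mul_smul_comm, smul_mul_assoc, smul_add, smul_smul, mul_one,
    one_mul, hb, hc, hbc]
  match_scalars <;> field_simp <;> ring

end RingIdentities

theorem g_mul_self (i : Fin 4) : g i * g i = algebraMap ℝ CGA (![1, 1, 1, -1] i) := by
  rw [g, ι_sq_scalar]
  exact congrArg _ (QuadraticMap.weightedSumSquares_single _ i)

theorem g_mul_g_mul_self (i : Fin 4) (x : CGA) : g i * (g i * x) = (![1, 1, 1, -1] i : ℝ) • x := by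
  rw [← mul_assoc, g_mul_self, Algebra.algebraMap_eq_smul_one, smul_one_mul]

theorem g_mul_g_comm {i j : Fin 4} (hij : i ≠ j) : g i * g j = -(g j * g i) :=
  ι_mul_ι_comm_of_isOrtho (QuadraticMap.isOrtho_weightedSumSquares_single _ hij)

theorem g_mul_g_mul_comm {i j : Fin 4} (hij : i ≠ j) (x : CGA) :
    g i * (g j * x) = -(g j * (g i * x)) :=
  ι_mul_ι_mul_of_isOrtho x (QuadraticMap.isOrtho_weightedSumSquares_single _ hij)

theorem e₁_mul_self : g 0 * g 0 = 1 := by simpa using g_mul_self 0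

theorem e_mul_self : g 2 * g 2 = 1 := by simpa using g_mul_self 2

theorem ē_mul_self : g 3 * g 3 = -1 := by simpa using g_mul_self 3

theorem e₁e_mul_self : g 0 * g 2 * (g 0 * g 2) = -1 := by
  rw [mul_mul_self_of_anticomm (g_mul_g_comm (by decide)), e₁_mul_self, e_mul_self, mul_one]

theorem eē_mul_self : g 2 * g 3 * (g 2 * g 3) = 1 := by
  rw [mul_mul_self_of_anticomm (g_mul_g_comm (by decide)), e_mul_self, ē_mul_self, one_mul,
    neg_neg]

theorem e₁e_mul_eē : g 0 * g 2 * (g 2 * g 3) = -(g 2 * g 3 * (g 0 * g 2)) := by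
  simp only [mul_assoc, g_mul_g_mul_comm (by decide : (3 : Fin 4) ≠ 0),
    g_mul_g_mul_comm (by decide : (2 : Fin 4) ≠ 0), g_mul_g_comm (by decide : (3 : Fin 4) ≠ 2),
    g_mul_g_mul_self, mul_neg, neg_neg]

theorem e₁e_mul_T :
    g 0 * g 2 * (1 + (1 / 2 : ℝ) • (nv * g 0)) = g 0 * g 2 + (1 / 2 : ℝ) • (1 + g 2 * g 3) := by
  simp only [nv, mul_add, add_mul, mul_one, mul_smul_comm, mul_assoc,
    g_mul_g_comm (by decide : (3 : Fin 4) ≠ 0), g_mul_g_comm (by decide : (2 : Fin 4) ≠ 0),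
    g_mul_g_mul_comm (by decide : (2 : Fin 4) ≠ 0), g_mul_g_mul_self, e₁_mul_self, e_mul_self,
    mul_neg, neg_neg]
  norm_num

/-- In the conformal geometric algebra Cl(3,1) of the plane, the versors
`S = e₁e` and `T = 1 + n e₁/2` satisfy `S² = -1` and `(ST)³ = -1`; hence their images in the
conformal group (where `±A` act identically by sandwiching) satisfy the modular group
relations `S² = I` and `(ST)³ = I`. -/
theorem modular_group_relations_in_CGA
    (S T : CGA) (hS : S = g 0 * g 2) (hT : T = 1 + (1 / 2 : ℝ) • (nv * g 0)) :
    S * S = -1 ∧ (S * T) ^ 3 = -1 ∧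
    (∀ X : CGA, reverse (Q := Q31) (S * S) * X * (S * S) = X) ∧
    (∀ X : CGA, reverse (Q := Q31) ((S * T) ^ 3) * X * ((S * T) ^ 3) = X) := by
  have hSS : S * S = -1 := hS ▸ e₁e_mul_self
  have hST : (S * T) ^ 3 = -1 := by
    rw [hS, hT, e₁e_mul_T]
    exact pow_three_eq_neg_one_of_mul_self_eq_sub_one
      (mul_self_eq_sub_one_of_anticomm e₁e_mul_self eē_mul_self e₁e_mul_eē)
  refine ⟨hSS, hST, fun X => ?_, fun X => ?_⟩ <;> simp [hSS, hST]
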